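/- Higher-order CBF nesting: let b₀ : [0,∞) → ℝ be C¹ and define b₁(t) := b₀'(t) + α₀(b₀(t)) where α₀ is locally Lipschitz, nondecreasing, α₀(0) = 0. If b₀(0) ≥ 0 and b₁(t) ≥ 0 for all t ≥ 0, then b₀(t) ≥ 0 for all t ≥ 0. -/

import Mathlib

/-!
Wherever `b₀ < 0`, monotonicity of `α₀` and `α₀ 0 = 0` give `α₀ (b₀ t) ≤ 0`, so
`b₀' t = b₁ t - α₀ (b₀ t) ≥ 0`. A function whose derivative is nonnegative wherever it is
negative cannot become negative: on the interval from its last nonnegative point before a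
negative value it would be monotone, hence nonnegative.
-/

open Set

theorem exists_last_nonneg_of_neg {f : ℝ → ℝ} {a b : ℝ} (hab : a ≤ b)
    (hf : ContinuousOn f (Icc a b)) (ha : 0 ≤ f a) (hb : f b < 0) :
    ∃ s ∈ Ico a b, 0 ≤ f s ∧ ∀ u ∈ Ioc s b, f u < 0 := by
  have hcompact : IsCompact (Icc a b ∩ f ⁻¹' Ici 0) :=
    isCompact_Icc.of_isClosed_subset
      (hf.preimage_isClosed_of_isClosed isClosed_Icc isClosed_Ici) inter_subset_left
  obtain ⟨s, ⟨⟨has, hsb⟩, hs⟩, hgreatest⟩ :=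
    hcompact.exists_isGreatest ⟨a, ⟨left_mem_Icc.2 hab, ha⟩⟩
  refine ⟨s, ⟨has, hsb.lt_of_ne ?_⟩, hs, fun u hu => ?_⟩
  · rintro rfl
    exact hb.not_ge hs
  · by_contra! hu_nonneg
    exact hu.1.not_ge (hgreatest ⟨⟨has.trans hu.1.le, hu.2⟩, hu_nonneg⟩)

theorem nonneg_of_deriv_nonneg_of_neg {f : ℝ → ℝ} {a b : ℝ} (hab : a ≤ b)
    (hf : ContinuousOn f (Icc a b)) (hf' : DifferentiableOn ℝ f (Ioo a b))
    (hderiv : ∀ u ∈ Ioo a b, f u < 0 → 0 ≤ deriv f u) (ha : 0 ≤ f a) :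
    0 ≤ f b := by
  by_contra! hb
  obtain ⟨s, ⟨has, hsb⟩, hs, hneg⟩ := exists_last_nonneg_of_neg hab hf ha hb
  have hmono : MonotoneOn f (Icc s b) := by
    refine monotoneOn_of_deriv_nonneg (convex_Icc s b) (hf.mono (Icc_subset_Icc_left has))
      ?_ fun u hu => ?_
    · rw [interior_Icc]
      exact hf'.mono (Ioo_subset_Ioo_left has)
    · rw [interior_Icc] at hu
      exact hderiv u ⟨has.trans_lt hu.1, hu.2⟩ (hneg u ⟨hu.1, hu.2.le⟩)
  linarith [hmono (left_mem_Icc.2 hsb.le) (right_mem_Icc.2 hsb.le) hsb.le]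

theorem hocbf_nesting_general
    (b₀ : ℝ → ℝ) (hC1 : ContDiff ℝ 1 b₀)
    (α₀ : ℝ → ℝ) (hmono : Monotone α₀) (hα0 : α₀ 0 = 0)
    (b₁ : ℝ → ℝ) (hb₁ : ∀ t, b₁ t = deriv b₀ t + α₀ (b₀ t))
    (h0 : 0 ≤ b₀ 0)
    (hpos : ∀ t, 0 ≤ t → 0 ≤ b₁ t) :
    ∀ t, 0 ≤ t → 0 ≤ b₀ t := by
  intro t ht
  have hderiv : ∀ u ∈ Ioo 0 t, b₀ u < 0 → 0 ≤ deriv b₀ u := by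
    intro u hu hneg
    have hα : α₀ (b₀ u) ≤ 0 := hα0 ▸ hmono hneg.le
    linarith [hb₁ u, hpos u hu.1.le]
  exact nonneg_of_deriv_nonneg_of_neg ht hC1.continuous.continuousOn
    (hC1.differentiable one_ne_zero).differentiableOn hderiv h0

theorem hocbf_nesting
    (b₀ : ℝ → ℝ) (hC1 : ContDiff ℝ 1 b₀)
    (α₀ : ℝ → ℝ) (hlip : LocallyLipschitz α₀) (hmono : Monotone α₀) (hα0 : α₀ 0 = 0)
    (b₁ : ℝ → ℝ) (hb₁ : ∀ t, b₁ t = deriv b₀ t + α₀ (b₀ t))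
    (h0 : 0 ≤ b₀ 0)
    (hpos : ∀ t, 0 ≤ t → 0 ≤ b₁ t) :
    ∀ t, 0 ≤ t → 0 ≤ b₀ t :=
  hocbf_nesting_general b₀ hC1 α₀ hmono hα0 b₁ hb₁ h0 hpos
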